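/- arXiv:1705.09031 — 6 statements merged into one kernel-verified Lean document; each statement's English description precedes it below -/
import Mathlib

section
/- Let G be a DAG over vertex set X, and let A, B be distinct vertices with C a set of vertices not containing A or B. If every path between A and B is inactive given C (i.e., A and B are d-separated by C), then A and B are d-separated by C in the subgraph of G induced by the ancestors of {A, B} ∪ C. -/
variable {V : Type*}

/-- `Ancestor E x y`: there is a (possibly trivial) directed path from `x` to `y`. -/
def Ancestor (E : V → V → Prop) (x y : V) : Prop :=
  Relation.ReflTransGen E x y

/-- A directed graph is acyclic (a DAG) if it has no directed cycles. -/
def Acyclic (E : V → V → Prop) : Prop :=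
  ∀ v : V, ¬ Relation.TransGen E v v

/-- `v` is a collider on the path (vertex list) `l`. -/
def ColliderOn (E : V → V → Prop) (l : List V) (v : V) : Prop :=
  ∃ x y : V, [x, v, y] <:+: l ∧ E x v ∧ E y v

/-- `v` is an interior non-collider on the path `l`. -/
def NonColliderOn (E : V → V → Prop) (l : List V) (v : V) : Prop :=
  (∃ x y : V, [x, v, y] <:+: l) ∧ ¬ ColliderOn E l v

/-- `l` is a path between `a` and `b` that is active given the conditioning set `C`:
every collider on `l` has a descendant in `C` and no non-collider on `l` is in `C`. -/
def ActivePath (E : V → V → Prop) (C : Set V) (a b : V) (l : List V) : Prop :=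
  l.head? = some a ∧ l.getLast? = some b ∧ l.Nodup ∧
  l.Chain' (fun u v => E u v ∨ E v u) ∧
  (∀ v, ColliderOn E l v → ∃ d ∈ C, Ancestor E v d) ∧
  (∀ v, NonColliderOn E l v → v ∉ C)

/-- `a` and `b` are d-connected given `C`. -/
def DConn (E : V → V → Prop) (C : Set V) (a b : V) : Prop :=
  ∃ l : List V, ActivePath E C a b l

/-- `a` and `b` are d-separated given `C`. -/
def DSep (E : V → V → Prop) (C : Set V) (a b : V) : Prop :=
  ¬ DConn E C a b

/-!
A path in a subgraph of a DAG is a path in the DAG, and since a DAG has no 2-cycles, every DAG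
edge between consecutive vertices of the path is the path's own edge. So both graphs have the same
colliders on the path, while descendants only grow when edges are added: a path active in the
subgraph is active in the DAG. The ancestral subgraph is such a subgraph.
-/
theorem Acyclic.asymm {E : V → V → Prop} (hE : Acyclic E) ⦃u v : V⦄ (huv : E u v) :
    ¬ E v u :=
  fun hvu => hE u (.head huv (.single hvu))

section Subgraph

variable {E E' : V → V → Prop} (hle : ∀ ⦃u v⦄, E' u v → E u v)
include hle

theorem ColliderOn.of_le {l : List V} {v : V} (h : ColliderOn E' l v) : ColliderOn E l v :=
  let ⟨x, y, hxvy, hxv, hyv⟩ := h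
  ⟨x, y, hxvy, hle hxv, hle hyv⟩

theorem ColliderOn.of_le_of_asymm (hE : ∀ ⦃u v⦄, E u v → ¬ E v u) {l : List V} {v : V}
    (hchain : l.IsChain (fun u v => E' u v ∨ E' v u)) (h : ColliderOn E l v) :
    ColliderOn E' l v := by
  obtain ⟨x, y, hxvy, hxv, hyv⟩ := h
  have hsub : [x, v, y].IsChain (fun u v => E' u v ∨ E' v u) := hchain.infix hxvy
  simp only [List.isChain_cons_cons, List.isChain_singleton, and_true] at hsub
  obtain ⟨hxv' | hvx', hvy' | hyv'⟩ := hsub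
  · exact absurd (hle hvy') (hE hyv)
  · exact ⟨x, y, hxvy, hxv', hyv'⟩
  · exact absurd (hle hvx') (hE hxv)
  · exact absurd (hle hvx') (hE hxv)

theorem ActivePath.of_le (hE : ∀ ⦃u v⦄, E u v → ¬ E v u) {C : Set V} {a b : V} {l : List V}
    (h : ActivePath E' C a b l) : ActivePath E C a b l := by
  obtain ⟨hhead, hlast, hnodup, hchain, hcol, hncol⟩ := h
  refine ⟨hhead, hlast, hnodup, hchain.imp fun _ _ h => h.imp (hle ·) (hle ·), ?_, ?_⟩
  · intro v hv
    obtain ⟨d, hdC, hvd⟩ := hcol v (hv.of_le_of_asymm hle hE hchain)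
    exact ⟨d, hdC, Relation.ReflTransGen.mono hle _ _ hvd⟩
  · rintro v ⟨hinner, hnc⟩
    exact hncol v ⟨hinner, fun hc => hnc (hc.of_le hle)⟩

theorem DSep.of_le (hE : ∀ ⦃u v⦄, E u v → ¬ E v u) {C : Set V} {a b : V}
    (h : DSep E C a b) : DSep E' C a b :=
  fun ⟨l, hl⟩ => h ⟨l, hl.of_le hle hE⟩

end Subgraph

theorem stmt_0_general (E : V → V → Prop) (hacyc : Acyclic E) (A B : V) (C : Set V)
    (hsep : DSep E C A B) :
    DSep (fun u v => E u v ∧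
        (∃ y, (y = A ∨ y = B ∨ y ∈ C) ∧ Ancestor E u y) ∧
        (∃ y, (y = A ∨ y = B ∨ y ∈ C) ∧ Ancestor E v y))
      C A B :=
  hsep.of_le (fun _ _ h => h.1) hacyc.asymm

/-- If `A` and `B` are d-separated by `C` in a DAG `G`, then they are d-separated by `C`
in the subgraph of `G` induced by the ancestors of `{A, B} ∪ C`. -/
theorem stmt_0 (E : V → V → Prop) (hacyc : Acyclic E) (A B : V) (C : Set V)
    (hne : A ≠ B) (hA : A ∉ C) (hB : B ∉ C)
    (hsep : DSep E C A B) :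
    DSep (fun u v => E u v ∧
        (∃ y, (y = A ∨ y = B ∨ y ∈ C) ∧ Ancestor E u y) ∧
        (∃ y, (y = A ∨ y = B ∨ y ∈ C) ∧ Ancestor E v y))
      C A B :=
  stmt_0_general E hacyc A B C hsep
end

section
/- Let G be a DAG over X = O ∪ L ∪ S ∪ M, where M is a set of missingness-indicator vertices none of which is an ancestor of any vertex in O ∪ S nor of any other vertex of M. Let O_i, O_j ∈ O, W ⊆ O \ {O_i, O_j}, and let S_t ⊆ S ∪ M and S_l ⊆ S ∪ M be sets with S_t ⊆ S_l and S_l \ S_t ⊆ M. If O_i and O_j are d-connected given W ∪ S_t, then O_i and O_j are d-connected given W ∪ S_l. -/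
variable {V : Type*}

/-!
The path witnessing d-connection given `W ∪ St` stays active given `W ∪ Sl`: colliders keep
their descendants, and a non-collider `v` that becomes blocked lies in `Sl \ St ⊆ M`. Such a
`v` has an outgoing edge on the path; following the path in that direction reaches either an
endpoint (in `O`) or a collider with a descendant in `W ∪ St ⊆ O ∪ S ∪ (M \ {v})`, so `v`
would be an ancestor of a vertex of `O ∪ S` or of an indicator in `M` other than itself.
-/
variable {E : V → V → Prop}

lemma ColliderOn.of_infix {l l' : List V} {v : V} (h : ColliderOn E l v) (hl : l <:+: l') :
    ColliderOn E l' v := by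
  obtain ⟨x, y, hxy, hx, hy⟩ := h
  exact ⟨x, y, hxy.trans hl, hx, hy⟩

lemma ColliderOn.reverse {l : List V} {v : V} (h : ColliderOn E l v) :
    ColliderOn E l.reverse v := by
  obtain ⟨x, y, hxy, hx, hy⟩ := h
  exact ⟨y, x, by simpa using List.reverse_infix.mpr hxy, hy, hx⟩

/-- Walking along the path away from `v` through the edge `v → x`, one either follows directed
edges to the end of the path or meets a first collider, whose descendant in `C` then
descends from `v`. -/
lemma exists_ancestor_of_head_edge {C : Set V} :
    ∀ {v x : V} {rest : List V}, (v :: x :: rest).IsChain (fun u w => E u w ∨ E w u) →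
      (∀ w, ColliderOn E (v :: x :: rest) w → ∃ d ∈ C, Ancestor E w d) → E v x →
      ∃ d, (d ∈ C ∨ (x :: rest).getLast? = some d) ∧ Ancestor E v d := by
  intro v x rest
  induction rest generalizing v x with
  | nil => exact fun _ _ hvx => ⟨x, Or.inr rfl, .single hvx⟩
  | cons y t ih =>
    intro hchain hcol hvx
    have hchain' := (List.isChain_cons_cons.mp hchain).2
    rcases (List.isChain_cons_cons.mp hchain').1 with hxy | hyx
    · have hcol' : ∀ w, ColliderOn E (x :: y :: t) w → ∃ d ∈ C, Ancestor E w d :=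
        fun w hw => hcol w (hw.of_infix (List.suffix_cons v _).isInfix)
      obtain ⟨d, hd, hxd⟩ := ih hchain' hcol' hxy
      exact ⟨d, by simpa using hd, .head hvx hxd⟩
    · obtain ⟨d, hdC, hxd⟩ := hcol x ⟨v, y, ⟨[], t, rfl⟩, hvx, hyx⟩
      exact ⟨d, Or.inl hdC, .head hvx hxd⟩

lemma ActivePath.exists_ancestor_of_nonColliderOn {C : Set V} {a b v : V} {l : List V}
    (hl : ActivePath E C a b l) (hv : NonColliderOn E l v) :
    ∃ d, (d ∈ C ∨ d = a ∨ d = b) ∧ Ancestor E v d := by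
  obtain ⟨hhead, hlast, -, hchain, hcol, -⟩ := hl
  obtain ⟨⟨x, y, s, t, rfl⟩, hnc⟩ := hv
  have ha : (x :: s.reverse).getLast? = some a := by simpa [List.getLast?_cons] using hhead
  have hb : (y :: t).getLast? = some b := by simpa using hlast
  have hxvy : (E x v ∨ E v x) ∧ (E v y ∨ E y v) := by
    have h := hchain.infix ⟨s, t, rfl⟩
    simp only [List.isChain_cons_cons] at h
    exact ⟨h.1, h.2.1⟩
  have hout : E v x ∨ E v y := by
    rcases hxvy with ⟨hxv | hvx, hvy | hyv⟩
    exacts [.inr hvy, (hnc ⟨x, y, ⟨s, t, rfl⟩, hxv, hyv⟩).elim, .inl hvx, .inl hvx]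
  rcases hout with hvx | hvy
  · have hsuf : (v :: x :: s.reverse) <:+: (s ++ [x, v, y] ++ t).reverse :=
      ⟨(y :: t).reverse, [], by simp⟩
    obtain ⟨d, hd, hvd⟩ := exists_ancestor_of_head_edge
      (List.isChain_reverse.mpr (hchain.imp fun _ _ h => h.symm) |>.infix hsuf)
      (fun w hw => hcol w (by simpa using (hw.of_infix hsuf).reverse)) hvx
    exact ⟨d, hd.imp_right fun h => .inl (Option.some.inj (ha ▸ h)).symm, hvd⟩
  · have hsuf : (v :: y :: t) <:+: (s ++ [x, v, y] ++ t) := ⟨s ++ [x], [], by simp⟩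
    obtain ⟨d, hd, hvd⟩ := exists_ancestor_of_head_edge (hchain.infix hsuf)
      (fun w hw => hcol w (hw.of_infix hsuf)) hvy
    exact ⟨d, hd.imp_right fun h => .inr (Option.some.inj (hb ▸ h)).symm, hvd⟩

lemma ActivePath.mono {C C' : Set V} {a b : V} {l : List V} (hl : ActivePath E C a b l)
    (hCC' : C ⊆ C') (hnew : ∀ v ∈ C' \ C, ¬ NonColliderOn E l v) : ActivePath E C' a b l := by
  obtain ⟨hhead, hlast, hnodup, hchain, hcol, hnc⟩ := hl
  refine ⟨hhead, hlast, hnodup, hchain, fun v hv => ?_, fun v hv hvC' => ?_⟩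
  · obtain ⟨d, hdC, hvd⟩ := hcol v hv
    exact ⟨d, hCC' hdC, hvd⟩
  · exact hnew v ⟨hvC', hnc v hv⟩ hv

theorem stmt_1_general (E : V → V → Prop) (O S M : Set V)
    (hM : ∀ m ∈ M, ∀ x : V, Ancestor E m x → x ∉ O ∪ S ∧ (x ∈ M → x = m))
    (Oi Oj : V) (hOi : Oi ∈ O) (hOj : Oj ∈ O)
    (W : Set V) (hW : W ⊆ O \ {Oi, Oj})
    (St Sl : Set V) (hSt : St ⊆ S ∪ M)
    (hsub : St ⊆ Sl) (hdiff : Sl \ St ⊆ M)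
    (hconn : DConn E (W ∪ St) Oi Oj) :
    DConn E (W ∪ Sl) Oi Oj := by
  obtain ⟨l, hl⟩ := hconn
  refine ⟨l, hl.mono (Set.union_subset_union_right W hsub) fun v ⟨hvC', hvC⟩ hv => ?_⟩
  have hvSt : v ∉ St := fun h => hvC (.inr h)
  have hvM : v ∈ M := hdiff ⟨hvC'.resolve_left fun h => hvC (.inl h), hvSt⟩
  obtain ⟨d, hd, hvd⟩ := hl.exists_ancestor_of_nonColliderOn hv
  obtain ⟨hdOS, hdM⟩ := hM v hvM d hvd
  rcases hd with (hdW | hdSt) | rfl | rfl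
  · exact hdOS (.inl (hW hdW).1)
  · rcases hSt hdSt with hdS | hdM'
    · exact hdOS (.inr hdS)
    · exact hvSt (hdM hdM' ▸ hdSt)
  · exact hdOS (.inl hOi)
  · exact hdOS (.inl hOj)

/-- Test-wise deletion lemma: under the assumption that no missingness indicator in `M`
is an ancestor of any vertex of `O ∪ S` or of any other vertex of `M`, d-connection given
`W ∪ S_t` implies d-connection given `W ∪ S_l`, where `S_t ⊆ S_l` and `S_l \ S_t ⊆ M`. -/
theorem stmt_1 (E : V → V → Prop) (hacyc : Acyclic E) (O L S M : Set V)
    (hM : ∀ m ∈ M, ∀ x : V, Ancestor E m x → x ∉ O ∪ S ∧ (x ∈ M → x = m))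
    (Oi Oj : V) (hOi : Oi ∈ O) (hOj : Oj ∈ O)
    (W : Set V) (hW : W ⊆ O \ {Oi, Oj})
    (St Sl : Set V) (hSt : St ⊆ S ∪ M) (hSl : Sl ⊆ S ∪ M)
    (hsub : St ⊆ Sl) (hdiff : Sl \ St ⊆ M)
    (hconn : DConn E (W ∪ St) Oi Oj) :
    DConn E (W ∪ Sl) Oi Oj :=
  stmt_1_general E O S M hM Oi Oj hOi hOj W hW St Sl hSt hsub hdiff hconn
end

section
/- In a DAG G, if vertex Z lies on a path π between A and B and π is active given a set C with Z a non-collider on π, then Z is an ancestor of A, of B, or of some vertex in C. -/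
variable {V : Type*}

/-!
Follow the path away from the non-collider `Z` along an edge pointing out of `Z`, and keep going
while the edges point forward. Either this directed walk reaches the end of the path, or it stops
at the first backward edge, where the vertex reached is a collider and hence has a descendant in
`C`. Since `Z` is a non-collider, one of its two path-edges points out of it, and running the
argument on the path or on its reverse gives the three cases.
-/

section

variable {E : V → V → Prop}

theorem ColliderOn.of_reverse {l : List V} {v : V} (h : ColliderOn E l.reverse v) :
    ColliderOn E l v := by
  obtain ⟨x, y, hinf, hx, hy⟩ := h
  exact ⟨y, x, by simpa using List.reverse_infix.mpr hinf, hy, hx⟩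

theorem NonColliderOn.exists_child {l : List V} {z : V}
    (hchain : l.IsChain (fun u v => E u v ∨ E v u)) (hz : NonColliderOn E l z) :
    ∃ x y, [x, z, y] <:+: l ∧ (E z x ∨ E z y) := by
  obtain ⟨⟨x, y, hinf⟩, hnc⟩ := hz
  have hxz : E x z ∨ E z x := (List.isChain_cons_cons.mp (hchain.infix hinf)).1
  have hzy : E z y ∨ E y z :=
    (List.isChain_cons_cons.mp (hchain.infix ((List.suffix_cons x [z, y]).isInfix.trans hinf))).1
  refine ⟨x, y, hinf, ?_⟩
  rcases hzy with hzy | hyz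
  · exact Or.inr hzy
  · exact Or.inl (hxz.resolve_left fun hxz => hnc ⟨x, y, hinf, hxz, hyz⟩)

theorem ancestor_getLast_or_exists_mem_of_edge_infix {C : Set V} {l : List V} {b z y : V}
    (hchain : l.IsChain (fun u v => E u v ∨ E v u))
    (hcoll : ∀ v, ColliderOn E l v → ∃ d ∈ C, Ancestor E v d)
    (hlast : l.getLast? = some b) (hinf : [z, y] <:+: l) (hzy : E z y) :
    Ancestor E z b ∨ ∃ c ∈ C, Ancestor E z c := by
  obtain ⟨p, s, rfl⟩ := hinf
  induction s generalizing p z y with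
  | nil =>
    have hb : b = y := by simpa using hlast.symm
    exact Or.inl (hb ▸ Relation.ReflTransGen.single hzy)
  | cons w s ih =>
    have hyw_inf : [y, w] <:+: p ++ [z, y] ++ w :: s := ⟨p ++ [z], s, by simp⟩
    rcases (List.isChain_cons_cons.mp (hchain.infix hyw_inf)).1 with hyw | hwy
    · have hl : p ++ [z, y] ++ w :: s = p ++ [z] ++ [y, w] ++ s := by simp
      rw [hl] at hchain hcoll hlast
      rcases ih (p := p ++ [z]) hyw hchain hcoll hlast with hyb | ⟨c, hc, hyc⟩
      · exact Or.inl (.head hzy hyb)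
      · exact Or.inr ⟨c, hc, .head hzy hyc⟩
    · obtain ⟨c, hc, hyc⟩ := hcoll y ⟨z, w, ⟨p, s, by simp⟩, hzy, hwy⟩
      exact Or.inr ⟨c, hc, .head hzy hyc⟩

end

theorem stmt_7_general (E : V → V → Prop) (A B Z : V) (C : Set V)
    (l : List V) (hact : ActivePath E C A B l) (hZ : NonColliderOn E l Z) :
    Ancestor E Z A ∨ Ancestor E Z B ∨ ∃ c ∈ C, Ancestor E Z c := by
  obtain ⟨hhead, hlast, -, hchain, hcoll, -⟩ := hact
  obtain ⟨x, y, hinf, hZx | hZy⟩ := hZ.exists_child hchain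
  · have hchain_rev : l.reverse.IsChain (fun u v => E u v ∨ E v u) :=
      List.isChain_reverse.mpr (hchain.imp fun _ _ h => h.symm)
    have hinf_rev : [Z, x] <:+: l.reverse := by
      simpa using List.reverse_infix.mpr ((List.prefix_append [x, Z] [y]).isInfix.trans hinf)
    exact (ancestor_getLast_or_exists_mem_of_edge_infix hchain_rev
      (fun v hv => hcoll v hv.of_reverse) (by rwa [List.getLast?_reverse]) hinf_rev hZx).imp_right
      Or.inr
  · exact Or.inr (ancestor_getLast_or_exists_mem_of_edge_infix hchain hcoll hlast
      ((List.suffix_cons x [Z, y]).isInfix.trans hinf) hZy)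

/-- A non-collider on a path active given `C` is an ancestor of an endpoint or of `C`. -/
theorem stmt_7 (E : V → V → Prop) (hacyc : Acyclic E) (A B Z : V) (C : Set V)
    (l : List V) (hact : ActivePath E C A B l) (hZ : NonColliderOn E l Z) :
    Ancestor E Z A ∨ Ancestor E Z B ∨ ∃ c ∈ C, Ancestor E Z c :=
  stmt_7_general E A B Z C l hact hZ
end

section
/- Let G be a DAG and suppose X is d-connected to Y given C, and Y is d-connected to Z given C, where X, Z ∉ C and Y ∉ C. If X is d-separated from Z given C, then Y is a collider-free-connectable witness: concretely, concatenating an active path from X to Y with an active path from Y to Z given C must fail to be active only because Y becomes a collider at the junction that has no descendant in C; equivalently, X and Z are d-connected given C ∪ {Y} or Y is an ancestor of C ∪ {X, Z}. In particular, if additionally Y is not an ancestor of C ∪ {X, Z}, then X and Z are d-connected given C ∪ {Y}. -/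
variable {V : Type*}

/-!
If the path from `Y` to `X` (or to `Z`) leaves `Y` along an out-edge, follow it while the edges
keep pointing forward: either it reaches the endpoint, or it meets a collider, whose descendants
meet `C`; either way `Y` is an ancestor of `X`, `Z` or `C`. Otherwise both paths enter `Y`, and
their concatenation is a walk from `X` to `Z` that is active given `C ∪ {Y}`, with `Y` as a
collider. In a DAG an active walk can be shortened to an active path: cutting a loop `v … v`
only changes the status of `v`, and if `v` becomes a collider then either it already was one at
its first occurrence, or the loop leaves `v` forward and, unable to return to `v`, meets a collider
below `v`.
-/

namespace List

theorem triple_infix_iff_getElem? {l : List V} {x u y : V} :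
    [x, u, y] <:+: l ↔ ∃ k, l[k]? = some x ∧ l[k + 1]? = some u ∧ l[k + 2]? = some y := by
  rw [infix_iff_getElem?]
  constructor
  · rintro ⟨k, -, h⟩
    exact ⟨k, by simpa using h 0, by simpa [Nat.add_comm] using h 1,
      by simpa [Nat.add_comm] using h 2⟩
  · rintro ⟨k, hx, hu, hy⟩
    refine ⟨k, ?_, fun i hi => ?_⟩
    · have := (getElem?_eq_some_iff.mp hy).1
      simp only [length_cons, length_nil]
      omega
    · simp only [length_cons, length_nil] at hi
      interval_cases i <;> simpa [Nat.add_comm]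

theorem triple_infix_append_cons {l₁ l₂ : List V} {v x u y : V}
    (h : [x, u, y] <:+: l₁ ++ v :: l₂) :
    [x, u, y] <:+: l₁ ++ [v] ∨ [x, u, y] <:+: v :: l₂ ∨
      (l₁.getLast? = some x ∧ u = v ∧ l₂.head? = some y) := by
  simp only [triple_infix_iff_getElem?, getLast?_eq_getElem?, head?_eq_getElem?] at h ⊢
  obtain ⟨k, hx, hu, hy⟩ := h
  rcases lt_trichotomy (k + 1) l₁.length with hk | hk | hk
  · left
    refine ⟨k, ?_, ?_, ?_⟩ <;> grind
  · right; right
    grind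
  · right; left
    refine ⟨k - l₁.length, ?_, ?_, ?_⟩ <;> grind

theorem Nodup.neighbors_eq_of_triple_infix {l : List V} {x u y x' y' : V} (hl : l.Nodup)
    (h : [x, u, y] <:+: l) (h' : [x', u, y'] <:+: l) : x' = x ∧ y' = y := by
  rw [triple_infix_iff_getElem?] at h h'
  obtain ⟨k, hx, hu, hy⟩ := h
  obtain ⟨k', hx', hu', hy'⟩ := h'
  have : k' + 1 = k + 1 :=
    (getElem?_inj (getElem?_eq_some_iff.mp hu').1 hl).mp (hu'.trans hu.symm)
  obtain rfl : k' = k := by omega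
  grind

theorem Nodup.ne_head_of_triple_infix {l : List V} {x u y a : V} (hl : l.Nodup)
    (h : [x, u, y] <:+: l) (ha : l.head? = some a) : u ≠ a := by
  rintro rfl
  obtain ⟨k, -, hu, -⟩ := triple_infix_iff_getElem?.mp h
  rw [head?_eq_getElem?, ← hu] at ha
  have := (getElem?_inj (getElem?_eq_some_iff.mp hu).1 hl).mp ha.symm
  omega

theorem Nodup.ne_getLast_of_triple_infix {l : List V} {x u y b : V} (hl : l.Nodup)
    (h : [x, u, y] <:+: l) (hb : l.getLast? = some b) : u ≠ b := by
  rintro rfl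
  obtain ⟨k, -, hu, hy⟩ := triple_infix_iff_getElem?.mp h
  rw [getLast?_eq_getElem?, ← hu] at hb
  have := (getElem?_inj (getElem?_eq_some_iff.mp hu).1 hl).mp hb.symm
  have := (getElem?_eq_some_iff.mp hy).1
  omega

theorem exists_eq_append_cons_append_cons_of_not_nodup {l : List V} (h : ¬ l.Nodup) :
    ∃ s v m t, l = s ++ v :: m ++ v :: t := by
  induction l with
  | nil => simp at h
  | cons a l ih =>
    rw [nodup_cons, not_and_or, not_not] at h
    rcases h with ha | hl
    · obtain ⟨m, t, rfl⟩ := append_of_mem ha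
      exact ⟨[], a, m, t, rfl⟩
    · obtain ⟨s, v, m, t, rfl⟩ := ih hl
      exact ⟨a :: s, v, m, t, rfl⟩

end List

def ActiveTriple (E : V → V → Prop) (C : Set V) (x u y : V) : Prop :=
  (E x u ∧ E y u → ∃ d ∈ C, Ancestor E u d) ∧ (¬(E x u ∧ E y u) → u ∉ C)

/-- Unlike in `ActivePath`, vertices may repeat: each occurrence is judged by its neighbours. -/
def ActiveWalk (E : V → V → Prop) (C : Set V) (l : List V) : Prop :=
  l.IsChain (fun u v => E u v ∨ E v u) ∧ ∀ x u y, [x, u, y] <:+: l → ActiveTriple E C x u y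

section Walks

variable {E : V → V → Prop} {C D : Set V} {l l₁ l₂ : List V} {a b : V}

theorem ActiveTriple.symm {x u y : V} (h : ActiveTriple E C x u y) : ActiveTriple E C y u x := by
  simpa only [ActiveTriple, and_comm] using h

theorem ActiveWalk.infix (hl : ActiveWalk E C l) (h : l₁ <:+: l) : ActiveWalk E C l₁ :=
  ⟨hl.1.infix h, fun x u y hxuy => hl.2 x u y (hxuy.trans h)⟩

theorem ActiveWalk.reverse (hl : ActiveWalk E C l) : ActiveWalk E C l.reverse := by
  refine ⟨List.isChain_reverse.mpr (hl.1.imp fun _ _ h => h.symm), fun x u y hxuy => ?_⟩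
  refine (hl.2 y u x ?_).symm
  simpa using List.reverse_infix.mpr hxuy

theorem ActiveWalk.append_cons {v : V} (h₁ : ActiveWalk E C (l₁ ++ [v]))
    (h₂ : ActiveWalk E C (v :: l₂))
    (hv : ∀ x ∈ l₁.getLast?, ∀ y ∈ l₂.head?, ActiveTriple E C x v y) :
    ActiveWalk E C (l₁ ++ v :: l₂) := by
  refine ⟨by simpa using h₁.1.append_overlap (l₃ := l₂) h₂.1 (List.cons_ne_nil v []), ?_⟩
  intro x u y hxuy
  rcases List.triple_infix_append_cons hxuy with h | h | ⟨hx, rfl, hy⟩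
  · exact h₁.2 x u y h
  · exact h₂.2 x u y h
  · exact hv x hx y hy

theorem ActivePath.activeWalk (hp : ActivePath E C a b l) (hCD : C ⊆ D)
    (hD : D ⊆ C ∪ {a, b}) : ActiveWalk E D l := by
  obtain ⟨ha, hb, hnd, hch, hcol, hnc⟩ := hp
  refine ⟨hch, fun x u y hxuy => ⟨fun hc => ?_, fun hnc' huD => ?_⟩⟩
  · obtain ⟨d, hd, hud⟩ := hcol u ⟨x, y, hxuy, hc⟩
    exact ⟨d, hCD hd, hud⟩
  · have hu : ¬ ColliderOn E l u := by
      rintro ⟨x', y', h', hc⟩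
      obtain ⟨rfl, rfl⟩ := hnd.neighbors_eq_of_triple_infix hxuy h'
      exact hnc' hc
    rcases hD huD with huC | rfl | rfl
    · exact hnc u ⟨⟨x, y, hxuy⟩, hu⟩ huC
    · exact hnd.ne_head_of_triple_infix hxuy ha rfl
    · exact hnd.ne_getLast_of_triple_infix hxuy hb rfl

theorem ActiveWalk.activePath (hl : ActiveWalk E C l) (hnd : l.Nodup) (ha : l.head? = some a)
    (hb : l.getLast? = some b) : ActivePath E C a b l := by
  refine ⟨ha, hb, hnd, hl.1, ?_, ?_⟩
  · rintro v ⟨x, y, hxvy, hc⟩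
    exact (hl.2 x v y hxvy).1 hc
  · rintro v ⟨⟨x, y, hxvy⟩, hnc⟩
    exact (hl.2 x v y hxvy).2 fun hc => hnc ⟨x, y, hxvy, hc⟩

theorem ActiveWalk.transGen_or_ancestor_of_edge {z : V} (hl : ActiveWalk E C (a :: b :: l))
    (hab : E a b) (hz : (a :: b :: l).getLast? = some z) :
    Relation.TransGen E a z ∨ ∃ c ∈ C, Ancestor E a c := by
  induction l generalizing a b with
  | nil =>
    obtain rfl : b = z := by simpa using hz
    exact Or.inl (.single hab)
  | cons c l ih =>
    rcases (List.isChain_cons_cons.mp (List.isChain_cons_cons.mp hl.1).2).1 with hbc | hcb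
    · rcases ih (hl.infix (List.suffix_cons a _).isInfix) hbc (by simpa using hz) with
        hbz | ⟨d, hd, hbd⟩
      · exact Or.inl (.head hab hbz)
      · exact Or.inr ⟨d, hd, .head hab hbd⟩
    · obtain ⟨d, hd, hbd⟩ := (hl.2 a b c ⟨[], l, rfl⟩).1 ⟨hab, hcb⟩
      exact Or.inr ⟨d, hd, .head hab hbd⟩

theorem ActiveWalk.ancestor_or_edges_into_head {z : V} (hl : ActiveWalk E C (a :: l))
    (hz : (a :: l).getLast? = some z) :
    Ancestor E a z ∨ (∃ c ∈ C, Ancestor E a c) ∨ ∀ b ∈ l.head?, E b a := by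
  cases l with
  | nil =>
    obtain rfl : a = z := by simpa using hz
    exact Or.inl .refl
  | cons b l =>
    rcases (List.isChain_cons_cons.mp hl.1).1 with hab | hba
    · rcases hl.transGen_or_ancestor_of_edge hab hz with haz | hac
      · exact Or.inl haz.to_reflTransGen
      · exact Or.inr (Or.inl hac)
    · exact Or.inr (Or.inr fun b' hb' => by simpa [← Option.mem_some_iff.mp hb'] using hba)

theorem ActiveWalk.activeTriple_of_loop (hacyc : Acyclic E) {x v y : V} {m : List V}
    (hl : ActiveWalk E C (x :: v :: m ++ [v, y])) (hm : m ≠ []) : ActiveTriple E C x v y := by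
  obtain ⟨w, m', rfl⟩ := List.exists_cons_of_ne_nil hm
  obtain ⟨m₀, z, hz⟩ := (List.eq_nil_or_concat (w :: m')).resolve_left (List.cons_ne_nil w m')
  have hxvw : ActiveTriple E C x v w := hl.2 x v w ⟨[], m' ++ [v, y], rfl⟩
  have hzvy : ActiveTriple E C z v y := hl.2 z v y ⟨x :: v :: m₀, [], by simp [hz]⟩
  refine ⟨fun ⟨hxv, hyv⟩ => ?_, fun hnc => ?_⟩
  · by_cases hwv : E w v
    · exact hxvw.1 ⟨hxv, hwv⟩
    have hvw : E v w :=
      (List.isChain_cons_cons.mp (List.isChain_cons_cons.mp hl.1).2).1.resolve_right hwv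
    have hloop : ActiveWalk E C (v :: w :: (m' ++ [v])) := hl.infix ⟨[x], [y], by simp⟩
    rcases hloop.transGen_or_ancestor_of_edge hvw
      (List.getLast?_concat (l := v :: w :: m')) with hvv | hvc
    · exact absurd hvv (hacyc v)
    · exact hvc
  · by_cases hxv : E x v
    · exact hzvy.2 fun h => hnc ⟨hxv, h.2⟩
    · exact hxvw.2 fun h => hxv h.1

theorem ActiveWalk.dConn (hacyc : Acyclic E) (hl : ActiveWalk E C l) (ha : l.head? = some a)
    (hb : l.getLast? = some b) : DConn E C a b := by
  induction hn : l.length using Nat.strong_induction_on generalizing l with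
  | _ n ih =>
  by_cases hnd : l.Nodup
  · exact ⟨l, hl.activePath hnd ha hb⟩
  obtain ⟨s, v, m, t, rfl⟩ := List.exists_eq_append_cons_append_cons_of_not_nodup hnd
  have hm : m ≠ [] := by
    rintro rfl
    have : E v v ∨ E v v :=
      (List.isChain_pair (R := fun a b => E a b ∨ E b a)).mp (hl.1.infix ⟨s, t, by simp⟩)
    exact hacyc v (.single (this.elim id id))
  have hshort : ActiveWalk E C (s ++ v :: t) := by
    refine (hl.infix ⟨[], m ++ v :: t, by simp⟩).append_cons
      (hl.infix ⟨s ++ v :: m, [], by simp⟩) fun x hx y hy => ?_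
    obtain ⟨s', rfl⟩ := List.getLast?_eq_some_iff.mp hx
    obtain ⟨t', rfl⟩ := List.head?_eq_some_iff.mp hy
    exact (hl.infix ⟨s', t', by simp⟩).activeTriple_of_loop hacyc hm
  refine ih _ ?_ hshort (by simpa using ha) ?_ rfl
  · subst hn
    simp
  · rw [List.getLast?_append_cons] at hb ⊢
    exact hb

end Walks

theorem stmt_9_general (E : V → V → Prop) (hacyc : Acyclic E) (X Y Z : V) (C : Set V)
    (hXY : DConn E C X Y) (hYZ : DConn E C Y Z) :
    DConn E (C ∪ {Y}) X Z ∨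
      (Ancestor E Y X ∨ Ancestor E Y Z ∨ ∃ c ∈ C, Ancestor E Y c) := by
  obtain ⟨p, hp⟩ := hXY
  obtain ⟨q, hq⟩ := hYZ
  obtain ⟨p, rfl⟩ := List.getLast?_eq_some_iff.mp hp.2.1
  obtain ⟨q, rfl⟩ := List.head?_eq_some_iff.mp hq.1
  have hpC := hp.activeWalk subset_rfl Set.subset_union_left
  have hqC := hq.activeWalk subset_rfl Set.subset_union_left
  have hreverse : (p ++ [Y]).reverse = Y :: p.reverse := List.reverse_concat
  have hpX : (Y :: p.reverse).getLast? = some X := by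
    rw [← hreverse, List.getLast?_reverse]
    exact hp.1
  rcases (hreverse ▸ hpC.reverse).ancestor_or_edges_into_head hpX with hYX | hYC | hpInto
  · exact Or.inr (Or.inl hYX)
  · exact Or.inr (Or.inr (Or.inr hYC))
  rcases hqC.ancestor_or_edges_into_head hq.2.1 with hYZ | hYC | hqInto
  · exact Or.inr (Or.inr (Or.inl hYZ))
  · exact Or.inr (Or.inr (Or.inr hYC))
  have hcollider : ∀ g ∈ p.getLast?, ∀ h ∈ q.head?, ActiveTriple E (C ∪ {Y}) g Y h :=
    fun g hg h hh => ⟨fun _ => ⟨Y, Or.inr rfl, .refl⟩,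
      fun hnc => absurd ⟨hpInto g (by simpa using hg), hqInto h hh⟩ hnc⟩
  have hpWalk := hp.activeWalk Set.subset_union_left
    (Set.union_subset_union_right C (Set.singleton_subset_iff.mpr (Set.mem_insert_of_mem X rfl)))
  have hqWalk := hq.activeWalk Set.subset_union_left
    (Set.union_subset_union_right C (Set.singleton_subset_iff.mpr (Set.mem_insert Y {Z})))
  refine Or.inl ((hpWalk.append_cons hqWalk hcollider).dConn hacyc (by simpa using hp.1) ?_)
  rw [List.getLast?_append_cons]
  exact hq.2.1

/-- Composition property of d-connection: if `X` and `Y` are d-connected given `C`, `Y` and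
`Z` are d-connected given `C`, but `X ⊥_d Z | C`, then `X` and `Z` are d-connected given
`C ∪ {Y}` or `Y` is an ancestor of `C ∪ {X, Z}`. -/
theorem stmt_9 (E : V → V → Prop) (hacyc : Acyclic E) (X Y Z : V) (C : Set V)
    (hX : X ∉ C) (hZ : Z ∉ C) (hY : Y ∉ C)
    (hXY : DConn E C X Y) (hYZ : DConn E C Y Z)
    (hXZ : DSep E C X Z) :
    DConn E (C ∪ {Y}) X Z ∨
      (Ancestor E Y X ∨ Ancestor E Y Z ∨ ∃ c ∈ C, Ancestor E Y c) :=
  stmt_9_general E hacyc X Y Z C hXY hYZ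
end

section
/- Let G be a DAG over O ∪ L ∪ S with MAG G̃ over O constructed as follows: O_i and O_j are adjacent in G̃ iff there is an inducing path between them in G with respect to L and S; the mark at O_j on edge O_i–O_j is an arrowhead if O_j is not an ancestor of {O_i} ∪ S in G, and a tail otherwise. Then G̃ is an ancestral graph: it has no directed cycles, no almost directed cycles, and no vertex incident to an undirected edge has a parent or spouse. -/
variable {V : Type*}

/-- `l` is an inducing path between `a` and `b` with respect to `L` and `S`. -/
def InducingPath (E : V → V → Prop) (L S : Set V) (a b : V) (l : List V) : Prop :=
  l.head? = some a ∧ l.getLast? = some b ∧ l.Nodup ∧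
  l.Chain' (fun u v => E u v ∨ E v u) ∧
  (∀ v, ColliderOn E l v → Ancestor E v a ∨ Ancestor E v b ∨ ∃ s ∈ S, Ancestor E v s) ∧
  (∀ v, NonColliderOn E l v → v ∈ L)

/-- Adjacency in the MAG constructed from the DAG `E` over `O ∪ L ∪ S`. -/
def MagAdj (E : V → V → Prop) (O L S : Set V) (i j : V) : Prop :=
  i ∈ O ∧ j ∈ O ∧ i ≠ j ∧ ∃ l : List V, InducingPath E L S i j l

/-- The mark at `j` on the MAG edge between `i` and `j` is an arrowhead:
`j` is not an ancestor of `{i} ∪ S` in the DAG. -/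
def MagArrow (E : V → V → Prop) (S : Set V) (i j : V) : Prop :=
  ¬ (Ancestor E j i ∨ ∃ s ∈ S, Ancestor E j s)

/-- Directed edge `i → j` in the MAG: tail at `i`, arrowhead at `j`. -/
def MagDir (E : V → V → Prop) (O L S : Set V) (i j : V) : Prop :=
  MagAdj E O L S i j ∧ ¬ MagArrow E S j i ∧ MagArrow E S i j

/-- Bidirected edge `i ↔ j` in the MAG: arrowheads at both ends. -/
def MagBidir (E : V → V → Prop) (O L S : Set V) (i j : V) : Prop :=
  MagAdj E O L S i j ∧ MagArrow E S j i ∧ MagArrow E S i j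

/-- Undirected edge `i — j` in the MAG: tails at both ends. -/
def MagUndir (E : V → V → Prop) (O L S : Set V) (i j : V) : Prop :=
  MagAdj E O L S i j ∧ ¬ MagArrow E S j i ∧ ¬ MagArrow E S i j

/-- The MAG constructed from a DAG is an ancestral graph: no directed cycles, no almost
directed cycles, and no vertex incident to an undirected edge has a parent or spouse. -/
theorem stmt_10 (E : V → V → Prop) (hacyc : Acyclic E) (O L S : Set V)
    (hcov : ∀ v : V, v ∈ O ∪ L ∪ S)
    (hOL : Disjoint O L) (hOS : Disjoint O S) (hLS : Disjoint L S) :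
    (∀ x y : V, Relation.ReflTransGen (MagDir E O L S) x y → ¬ MagDir E O L S y x) ∧
    (∀ x y : V, Relation.ReflTransGen (MagDir E O L S) x y → ¬ MagBidir E O L S y x) ∧
    (∀ x y : V, MagUndir E O L S x y →
      ∀ z : V, ¬ MagDir E O L S z x ∧ ¬ MagBidir E O L S z x) := by
  have hR : ∀ x y : V, Relation.ReflTransGen (MagDir E O L S) x y →
      Ancestor E x y ∨ ∃ s ∈ S, Ancestor E x s := by
    intro x y h
    induction h with
    | refl => exact Or.inl Relation.ReflTransGen.refl
    | @tail b c h1 h2 ih =>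
      have htail : Ancestor E b c ∨ ∃ s ∈ S, Ancestor E b s := not_not.mp h2.2.1
      rcases ih with hxb | hxs
      · rcases htail with hbc | ⟨s, hs, hbs⟩
        · exact Or.inl (Relation.ReflTransGen.trans hxb hbc)
        · exact Or.inr ⟨s, hs, Relation.ReflTransGen.trans hxb hbs⟩
      · exact Or.inr hxs
  refine ⟨?_, ?_, ?_⟩
  · intro x y hxy hyx
    exact hyx.2.2 (hR x y hxy)
  · intro x y hxy hyx
    exact hyx.2.2 (hR x y hxy)
  · intro x y hxy z
    have hne : x ≠ y := hxy.1.2.2.1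
    have hxA : Ancestor E x y ∨ ∃ s ∈ S, Ancestor E x s := not_not.mp hxy.2.1
    have hyA : Ancestor E y x ∨ ∃ s ∈ S, Ancestor E y s := not_not.mp hxy.2.2
    have key : ∃ s ∈ S, Ancestor E x s := by
      rcases hxA with hxy' | hxs
      · rcases hyA with hyx' | ⟨s, hs, hys⟩
        · exfalso
          rcases Relation.ReflTransGen.cases_head hxy' with heq | ⟨c, hxc, hcy⟩
          · exact hne heq
          · exact hacyc x ((Relation.TransGen.head' hxc hcy).trans_left hyx')
        · exact ⟨s, hs, Relation.ReflTransGen.trans hxy' hys⟩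
      · exact hxs
    constructor
    · intro hd
      exact hd.2.2 (Or.inr key)
    · intro hd
      exact hd.2.2 (Or.inr key)
end

section
/- Let G be a DAG and let C ⊆ C' be conditioning sets such that every vertex of C' \ C is a sink in G (has no children) and does not lie on any path between A and B that is active given C. Then if A and B are d-connected given C, A and B are d-connected given C'. -/
variable {V : Type*}

/-- If every vertex of `C' \ C` is a sink and lies on no path between `A` and `B` active
given `C`, then d-connection given `C` implies d-connection given `C'`. -/
theorem stmt_14 (E : V → V → Prop) (hacyc : Acyclic E) (A B : V) (C C' : Set V)
    (hsub : C ⊆ C')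
    (hadd : ∀ v ∈ C' \ C, (∀ w : V, ¬ E v w) ∧
      ∀ l : List V, ActivePath E C A B l → v ∉ l)
    (hconn : DConn E C A B) :
    DConn E C' A B := by
  obtain ⟨l, h1, h2, h3, h4, h5, h6⟩ := hconn
  refine ⟨l, h1, h2, h3, h4, fun v hv => ?_, fun v hv hvC' => ?_⟩
  · obtain ⟨d, hd, ha⟩ := h5 v hv
    exact ⟨d, hsub hd, ha⟩
  · by_cases hvC : v ∈ C
    · exact h6 v hv hvC
    · obtain ⟨_, hnol⟩ := hadd v ⟨hvC', hvC⟩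
      obtain ⟨⟨x, y, hinf⟩, _⟩ := hv
      exact hnol l ⟨h1, h2, h3, h4, h5, h6⟩ (hinf.subset (by simp))
end
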